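/- The loop T_L satisfies the alternative laws x·(x·y) = (x·x)·y and (x·y)·y = x·(y·y), the flexible law x·(y·x) = (x·y)·x, and the C-loop identity x·(y·(y·z)) = ((x·y)·y)·z, for all x, y, z ∈ T_L. -/

import Mathlib

/-- Iterated Cayley–Dickson doubling starting from `ℝ`. -/
def CD : ℕ → Type
  | 0 => ℝ
  | n + 1 => CD n × CD n

instance cdAddCommGroup : ∀ n, AddCommGroup (CD n)
  | 0 => inferInstanceAs (AddCommGroup ℝ)
  | n + 1 => letI := cdAddCommGroup n; inferInstanceAs (AddCommGroup (CD n × CD n))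

noncomputable instance cdModule : ∀ n, Module ℝ (CD n)
  | 0 => inferInstanceAs (Module ℝ ℝ)
  | n + 1 => letI := cdModule n; inferInstanceAs (Module ℝ (CD n × CD n))

/-- Cayley–Dickson conjugation, starting from the identity on `ℝ`. -/
def cdConj : ∀ n, CD n → CD n
  | 0, x => x
  | n + 1, x => (cdConj n x.1, -x.2)

/-- Cayley–Dickson multiplication: `(a,b)(c,d) = (ac − d b̄, ā d + c b)`. -/
def cdMul : ∀ n, CD n → CD n → CD n
  | 0, x, y => @Mul.mul ℝ _ x y
  | n + 1, x, y =>
      (cdMul n x.1 y.1 - cdMul n y.2 (cdConj n x.2),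
       cdMul n (cdConj n x.1) y.2 + cdMul n y.1 x.2)

instance cdMulInst (n : ℕ) : Mul (CD n) := ⟨cdMul n⟩

instance cdOne : ∀ n, One (CD n)
  | 0 => ⟨(1 : ℝ)⟩
  | n + 1 => letI := cdOne n; ⟨((1 : CD n), 0)⟩

/-- The standard basis elements: under a doubling step `A → A × A`, a basis element
`e k` of `A` gives `e k = (e k, 0)` and `e (k + dim A) = (0, e k)`. -/
def cdE : ∀ n, ℕ → CD n
  | 0, _ => (1 : ℝ)
  | n + 1, k => if k < 2 ^ n then (cdE n k, 0) else (0, cdE n (k - 2 ^ n))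

/-- The trigintaduonions: the 32-dimensional real Cayley–Dickson algebra. -/
abbrev TT := CD 5

/-- The 32 standard basis elements `e 0 = 1, e 1, …, e 31` of `𝕋`. -/
def e (i : ℕ) : TT := cdE 5 i

/-- The trigintaduonion loop `T_L = {±e 0, ±e 1, …, ±e 31}`. -/
def TL : Set TT := {x | ∃ i < 32, x = e i ∨ x = -e i}

/-- A subloop of `T_L`: a nonempty subset of `T_L` closed under multiplication. -/
def IsSubloop (N : Set TT) : Prop :=
  N ⊆ TL ∧ N.Nonempty ∧ ∀ x ∈ N, ∀ y ∈ N, x * y ∈ N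

/-- Two subsets of `T_L` are isomorphic (as loops) if some bijection between them
preserves multiplication. -/
def LoopIso (A B : Set TT) : Prop :=
  ∃ f : TT → TT, Set.BijOn f A B ∧ ∀ x ∈ A, ∀ y ∈ A, f (x * y) = f x * f y


/-!
The product of two basis elements is `e i * e j = ± e (i ^^^ j)`, with a sign `basisSign n i j`
computed by the same recursion as the doubling. Each law is therefore an identity between signs,
and these are proved for every Cayley–Dickson algebra `CD n` by induction along the doubling:
multiplying `e i * e j` once more by `e i` on the left, or by `e j` on the right, changes the sign
exactly by that of `e i * e i = ± 1`, resp. `e j * e j = ± 1`. This gives both alternative laws on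
`±` basis elements; flexibility follows from them, and the C-loop identity follows from the
alternative laws because `y * y = ± 1` is central.
-/

lemma lt_two_pow_succ_cases {n k : ℕ} (hk : k < 2 ^ (n + 1)) :
    k < 2 ^ n ∨ ∃ k' < 2 ^ n, k = 2 ^ n + k' := by
  rcases Nat.lt_or_ge k (2 ^ n) with h | h
  · exact .inl h
  · exact .inr ⟨k - 2 ^ n, by rw [pow_succ] at hk; omega, by omega⟩

@[simp] lemma two_pow_add_bne_zero (n k : ℕ) : (2 ^ n + k != 0) = true :=
  bne_iff_ne.2 (by positivity)

lemma two_pow_add_eq_xor {n a : ℕ} (h : a < 2 ^ n) : 2 ^ n + a = 2 ^ n ^^^ a := by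
  refine Nat.eq_of_testBit_eq fun k => ?_
  rw [Nat.testBit_xor, Nat.testBit_two_pow]
  rcases lt_trichotomy k n with hk | rfl | hk
  · simp [Nat.testBit_two_pow_add_gt hk, hk.ne']
  · simp [Nat.testBit_two_pow_add_eq, Nat.testBit_lt_two_pow h]
  · have hnk : 2 ^ (n + 1) ≤ 2 ^ k := Nat.pow_le_pow_right two_pos hk
    rw [pow_succ] at hnk
    simp [Nat.testBit_lt_two_pow (show 2 ^ n + a < 2 ^ k by omega),
      Nat.testBit_lt_two_pow (show a < 2 ^ k by omega), hk.ne]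

lemma two_pow_add_xor {n a b : ℕ} (ha : a < 2 ^ n) (hb : b < 2 ^ n) :
    (2 ^ n + a) ^^^ b = 2 ^ n + (a ^^^ b) := by
  rw [two_pow_add_eq_xor ha, two_pow_add_eq_xor (Nat.xor_lt_two_pow ha hb), Nat.xor_assoc]

lemma xor_two_pow_add {n a b : ℕ} (ha : a < 2 ^ n) (hb : b < 2 ^ n) :
    a ^^^ (2 ^ n + b) = 2 ^ n + (b ^^^ a) := by
  rw [Nat.xor_comm, two_pow_add_xor hb ha]

lemma two_pow_add_xor_two_pow_add {n a b : ℕ} (ha : a < 2 ^ n) (hb : b < 2 ^ n) :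
    (2 ^ n + a) ^^^ (2 ^ n + b) = b ^^^ a := by
  rw [two_pow_add_eq_xor ha, two_pow_add_eq_xor hb, Nat.xor_comm (2 ^ n) b, ← Nat.xor_assoc,
    Nat.xor_assoc (2 ^ n), Nat.xor_comm (2 ^ n), Nat.xor_assoc, Nat.xor_self, Nat.xor_zero,
    Nat.xor_comm]

def negIf {α : Type*} [Neg α] (b : Bool) (x : α) : α := if b then -x else x

section negIf

variable {α : Type*}

@[simp] lemma negIf_false [Neg α] (x : α) : negIf false x = x := rfl

@[simp] lemma negIf_true [Neg α] (x : α) : negIf true x = -x := rfl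

@[simp] lemma negIf_negIf [InvolutiveNeg α] (a b : Bool) (x : α) :
    negIf a (negIf b x) = negIf (a ^^ b) x := by
  cases a <;> cases b <;> simp

@[simp] lemma neg_negIf [InvolutiveNeg α] (b : Bool) (x : α) : -negIf b x = negIf (!b) x := by
  cases b <;> simp

@[simp] lemma negIf_zero [NegZeroClass α] (b : Bool) : negIf b (0 : α) = 0 := by
  cases b <;> simp

@[simp] lemma negIf_mul [Mul α] [HasDistribNeg α] (b : Bool) (x y : α) :
    negIf b x * y = negIf b (x * y) := by
  cases b <;> simp

@[simp] lemma mul_negIf [Mul α] [HasDistribNeg α] (b : Bool) (x y : α) :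
    x * negIf b y = negIf b (x * y) := by
  cases b <;> simp

end negIf

namespace CD

variable {n : ℕ}

def mk (a b : CD n) : CD (n + 1) := (a, b)

lemma mk_fst_snd (x : CD (n + 1)) : mk x.1 x.2 = x := rfl

lemma one_eq_mk : (1 : CD (n + 1)) = mk 1 0 := rfl

lemma mk_add_mk (a b c d : CD n) : mk a b + mk c d = mk (a + c) (b + d) := rfl

lemma neg_mk (a b : CD n) : -mk a b = mk (-a) (-b) := rfl

lemma negIf_mk (s : Bool) (a b : CD n) : negIf s (mk a b) = mk (negIf s a) (negIf s b) := by
  cases s <;> rfl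

lemma mk_mul_mk (a b c d : CD n) :
    mk a b * mk c d = mk (a * c - d * cdConj n b) (cdConj n a * d + c * b) := rfl

lemma conj_mk (a b : CD n) : cdConj (n + 1) (mk a b) = mk (cdConj n a) (-b) := rfl

end CD

open CD

lemma cdConj_add : ∀ n (x y : CD n), cdConj n (x + y) = cdConj n x + cdConj n y
  | 0, _, _ => rfl
  | n + 1, x, y => by
    rw [← mk_fst_snd x, ← mk_fst_snd y, mk_add_mk, conj_mk, conj_mk, conj_mk, mk_add_mk,
      cdConj_add n, neg_add]

lemma cdConj_zero (n : ℕ) : cdConj n 0 = 0 :=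
  map_zero (AddMonoidHom.mk' (cdConj n) (cdConj_add n))

lemma cdConj_one : ∀ n, cdConj n 1 = 1
  | 0 => rfl
  | n + 1 => by rw [one_eq_mk, conj_mk, cdConj_one n, neg_zero]

lemma cdMul_add : ∀ n, (∀ x y z : CD n, x * (y + z) = x * y + x * z) ∧
    (∀ x y z : CD n, (x + y) * z = x * z + y * z)
  | 0 => ⟨mul_add (R := ℝ), add_mul (R := ℝ)⟩
  | n + 1 => by
    obtain ⟨hl, hr⟩ := cdMul_add n
    constructor <;> intro x y z <;>
      rw [← mk_fst_snd x, ← mk_fst_snd y, ← mk_fst_snd z, mk_add_mk, mk_mul_mk, mk_mul_mk,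
        mk_mul_mk, mk_add_mk] <;>
      simp only [hl, hr, cdConj_add] <;> congr 1 <;> abel

instance (n : ℕ) : NonUnitalNonAssocRing (CD n) :=
  { cdAddCommGroup n, cdMulInst n with
    left_distrib := (cdMul_add n).1
    right_distrib := (cdMul_add n).2
    zero_mul := fun x => by simpa using (cdMul_add n).2 0 0 x
    mul_zero := fun x => by simpa using (cdMul_add n).1 x 0 0 }

lemma cdMul_one : ∀ n, (∀ x : CD n, 1 * x = x) ∧ ∀ x : CD n, x * 1 = x
  | 0 => ⟨one_mul (M := ℝ), mul_one (M := ℝ)⟩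
  | n + 1 => by
    obtain ⟨hl, hr⟩ := cdMul_one n
    refine ⟨fun x => ?_, fun x => ?_⟩ <;>
      rw [← mk_fst_snd x, one_eq_mk, mk_mul_mk] <;>
      simp [hl, hr, cdConj_one, cdConj_zero]

instance (n : ℕ) : MulOneClass (CD n) :=
  { cdOne n, cdMulInst n with
    one_mul := (cdMul_one n).1
    mul_one := (cdMul_one n).2 }

lemma cdE_succ_of_lt {n k : ℕ} (h : k < 2 ^ n) : cdE (n + 1) k = mk (cdE n k) 0 := if_pos h

lemma cdE_succ_two_pow_add (n k : ℕ) : cdE (n + 1) (2 ^ n + k) = mk 0 (cdE n k) := by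
  have h : cdE (n + 1) (2 ^ n + k) = mk 0 (cdE n (2 ^ n + k - 2 ^ n)) := if_neg (by omega)
  rwa [Nat.add_sub_cancel_left] at h

lemma cdE_zero : ∀ n, cdE n 0 = 1
  | 0 => rfl
  | n + 1 => by rw [cdE_succ_of_lt (Nat.two_pow_pos n), cdE_zero n, one_eq_mk]

lemma cdConj_cdE : ∀ n i, i < 2 ^ n → cdConj n (cdE n i) = negIf (i != 0) (cdE n i)
  | 0, i, hi => by
    obtain rfl : i = 0 := by omega
    rfl
  | n + 1, i, hi => by
    rcases lt_two_pow_succ_cases hi with h | ⟨i, -, rfl⟩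
    · rw [cdE_succ_of_lt h, conj_mk, cdConj_cdE n i h, neg_zero, negIf_mk, negIf_zero]
    · rw [cdE_succ_two_pow_add, conj_mk, cdConj_zero, two_pow_add_bne_zero, negIf_true, neg_mk,
        neg_zero]

-- The branches are the products `(a,0)(c,0) = (a c, 0)`, `(a,0)(0,d) = (0, ā d)`,
-- `(0,b)(c,0) = (0, c b)` and `(0,b)(0,d) = (-d b̄, 0)`, where `ē i = -e i` exactly when
-- `i ≠ 0`.
def basisSign : ℕ → ℕ → ℕ → Bool
  | 0, _, _ => false
  | n + 1, i, j =>
    if i < 2 ^ n then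
      if j < 2 ^ n then basisSign n i j else (i != 0) ^^ basisSign n i (j - 2 ^ n)
    else
      if j < 2 ^ n then basisSign n j (i - 2 ^ n)
      else !((i - 2 ^ n != 0) ^^ basisSign n (j - 2 ^ n) (i - 2 ^ n))

lemma basisSign_succ_of_lt_of_lt {n i j : ℕ} (hi : i < 2 ^ n) (hj : j < 2 ^ n) :
    basisSign (n + 1) i j = basisSign n i j := by
  simp [basisSign, hi, hj]

lemma basisSign_succ_of_lt_add {n i : ℕ} (hi : i < 2 ^ n) (j : ℕ) :
    basisSign (n + 1) i (2 ^ n + j) = ((i != 0) ^^ basisSign n i j) := by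
  simp [basisSign, hi]

lemma basisSign_succ_add_of_lt {n : ℕ} (i : ℕ) {j : ℕ} (hj : j < 2 ^ n) :
    basisSign (n + 1) (2 ^ n + i) j = basisSign n j i := by
  simp [basisSign, hj]

lemma basisSign_succ_add_add {n : ℕ} (i j : ℕ) :
    basisSign (n + 1) (2 ^ n + i) (2 ^ n + j) = !((i != 0) ^^ basisSign n j i) := by
  simp [basisSign]

lemma basisSign_zero_left : ∀ n j, basisSign n 0 j = false
  | 0, _ => rfl
  | n + 1, j => by
    rcases Nat.lt_or_ge j (2 ^ n) with h | h
    · rw [basisSign_succ_of_lt_of_lt (Nat.two_pow_pos n) h, basisSign_zero_left n j]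
    · obtain ⟨j, rfl⟩ := Nat.exists_eq_add_of_le h
      rw [basisSign_succ_of_lt_add (Nat.two_pow_pos n), basisSign_zero_left n j]
      rfl

lemma basisSign_zero_right : ∀ n i, basisSign n i 0 = false
  | 0, _ => rfl
  | n + 1, i => by
    rcases Nat.lt_or_ge i (2 ^ n) with h | h
    · rw [basisSign_succ_of_lt_of_lt h (Nat.two_pow_pos n), basisSign_zero_right n i]
    · obtain ⟨i, rfl⟩ := Nat.exists_eq_add_of_le h
      rw [basisSign_succ_add_of_lt i (Nat.two_pow_pos n), basisSign_zero_left]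

lemma basisSign_self : ∀ n i, i < 2 ^ n → basisSign n i i = (i != 0)
  | 0, i, hi => by
    obtain rfl : i = 0 := by omega
    rfl
  | n + 1, i, hi => by
    rcases lt_two_pow_succ_cases hi with h | ⟨i, h, rfl⟩
    · rw [basisSign_succ_of_lt_of_lt h h, basisSign_self n i h]
    · rw [basisSign_succ_add_add, basisSign_self n i h]
      simp

-- `e i` and `e j` anticommute unless `i = 0`, `j = 0` or `i = j`.
lemma basisSign_swap : ∀ n i j, i < 2 ^ n → j < 2 ^ n →
    basisSign n j i = (basisSign n i j ^^ (i != 0) ^^ (j != 0) ^^ (i ^^^ j != 0))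
  | 0, i, j, hi, hj => by
    obtain rfl : i = 0 := by omega
    obtain rfl : j = 0 := by omega
    rfl
  | n + 1, i, j, hi', hj' => by
    rcases lt_two_pow_succ_cases hi' with hi | ⟨i, hi, rfl⟩ <;>
      rcases lt_two_pow_succ_cases hj' with hj | ⟨j, hj, rfl⟩
    · rw [basisSign_succ_of_lt_of_lt hi hj, basisSign_succ_of_lt_of_lt hj hi,
        basisSign_swap n i j hi hj]
    · rw [basisSign_succ_of_lt_add hi, basisSign_succ_add_of_lt j hi, xor_two_pow_add hi hj,
        two_pow_add_bne_zero, two_pow_add_bne_zero]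
      cases basisSign n i j <;> cases (i != 0) <;> rfl
    · rw [basisSign_succ_of_lt_add hj, basisSign_succ_add_of_lt i hj, two_pow_add_xor hi hj,
        two_pow_add_bne_zero, two_pow_add_bne_zero]
      cases basisSign n j i <;> cases (j != 0) <;> rfl
    · rw [basisSign_succ_add_add, basisSign_succ_add_add, two_pow_add_xor_two_pow_add hi hj,
        two_pow_add_bne_zero, two_pow_add_bne_zero, basisSign_swap n i j hi hj, Nat.xor_comm j]
      cases basisSign n i j <;> cases (i != 0) <;> cases (j != 0) <;> cases (i ^^^ j != 0) <;> rfl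

lemma basisSign_alternative : ∀ n i j, i < 2 ^ n → j < 2 ^ n →
    basisSign n i (i ^^^ j) = (basisSign n i j ^^ (i != 0)) ∧
      basisSign n (i ^^^ j) j = (basisSign n i j ^^ (j != 0))
  | 0, i, j, hi, hj => by
    obtain rfl : i = 0 := by omega
    obtain rfl : j = 0 := by omega
    exact ⟨rfl, rfl⟩
  | n + 1, i, j, hi', hj' => by
    have left i j hi hj := (basisSign_alternative n i j hi hj).1
    have right i j hi hj := (basisSign_alternative n i j hi hj).2
    rcases lt_two_pow_succ_cases hi' with hi | ⟨i, hi, rfl⟩ <;>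
      rcases lt_two_pow_succ_cases hj' with hj | ⟨j, hj, rfl⟩
    · have hij := Nat.xor_lt_two_pow hi hj
      simp only [basisSign_succ_of_lt_of_lt, hi, hj, hij]
      exact basisSign_alternative n i j hi hj
    · rw [xor_two_pow_add hi hj, basisSign_succ_of_lt_add hi, basisSign_succ_of_lt_add hi,
        basisSign_succ_add_add, two_pow_add_bne_zero, left j i hj hi, basisSign_swap n i j hi hj,
        Nat.xor_comm j i, left i j hi hj]
      constructor <;> cases basisSign n i j <;> cases (i != 0) <;> cases (j != 0) <;>
        cases (i ^^^ j != 0) <;> rfl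
    · rw [two_pow_add_xor hi hj, basisSign_succ_add_add, basisSign_succ_add_of_lt _ hj,
        basisSign_succ_add_of_lt _ hj, two_pow_add_bne_zero, Nat.xor_comm i j, right j i hj hi,
        left j i hj hi]
      constructor <;> cases basisSign n j i <;> cases (i != 0) <;> cases (j != 0) <;> rfl
    · have hji := Nat.xor_lt_two_pow hj hi
      rw [two_pow_add_xor_two_pow_add hi hj, basisSign_succ_add_of_lt i hji,
        basisSign_succ_of_lt_add hji, basisSign_succ_add_add, two_pow_add_bne_zero,
        two_pow_add_bne_zero, right j i hj hi, Nat.xor_comm j i, right i j hi hj,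
        basisSign_swap n i j hi hj]
      constructor <;> cases basisSign n i j <;> cases (i != 0) <;> cases (j != 0) <;>
        cases (i ^^^ j != 0) <;> rfl

lemma cdE_mul_cdE : ∀ n i j, i < 2 ^ n → j < 2 ^ n →
    cdE n i * cdE n j = negIf (basisSign n i j) (cdE n (i ^^^ j))
  | 0, _, _, _, _ => mul_one (1 : ℝ)
  | n + 1, i, j, hi', hj' => by
    rcases lt_two_pow_succ_cases hi' with hi | ⟨i, hi, rfl⟩ <;>
      rcases lt_two_pow_succ_cases hj' with hj | ⟨j, hj, rfl⟩
    · rw [cdE_succ_of_lt hi, cdE_succ_of_lt hj, mk_mul_mk, cdE_mul_cdE n i j hi hj,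
        basisSign_succ_of_lt_of_lt hi hj, cdE_succ_of_lt (Nat.xor_lt_two_pow hi hj), negIf_mk]
      simp [cdConj_zero]
    · rw [cdE_succ_of_lt hi, cdE_succ_two_pow_add, mk_mul_mk, cdConj_cdE n i hi, negIf_mul,
        cdE_mul_cdE n i j hi hj, xor_two_pow_add hi hj, Nat.xor_comm j i, cdE_succ_two_pow_add,
        basisSign_succ_of_lt_add hi, negIf_mk]
      simp [cdConj_zero]
    · rw [cdE_succ_two_pow_add, cdE_succ_of_lt hj, mk_mul_mk, cdE_mul_cdE n j i hj hi,
        two_pow_add_xor hi hj, Nat.xor_comm i j, cdE_succ_two_pow_add,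
        basisSign_succ_add_of_lt i hj, negIf_mk]
      simp [cdConj_zero]
    · rw [cdE_succ_two_pow_add, cdE_succ_two_pow_add, mk_mul_mk, cdConj_cdE n i hi, mul_negIf,
        cdE_mul_cdE n j i hj hi, two_pow_add_xor_two_pow_add hi hj,
        cdE_succ_of_lt (Nat.xor_lt_two_pow hj hi), basisSign_succ_add_add, negIf_mk]
      simp [cdConj_zero]

section basis

variable {n i j k : ℕ}

lemma cdE_mul_assoc_of_basisSign (hi : i < 2 ^ n) (hj : j < 2 ^ n) (hk : k < 2 ^ n)
    (h : (basisSign n j k ^^ basisSign n i (j ^^^ k)) =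
      (basisSign n i j ^^ basisSign n (i ^^^ j) k)) :
    cdE n i * (cdE n j * cdE n k) = cdE n i * cdE n j * cdE n k := by
  rw [cdE_mul_cdE n j k hj hk, mul_negIf, cdE_mul_cdE n i _ hi (Nat.xor_lt_two_pow hj hk),
    negIf_negIf, cdE_mul_cdE n i j hi hj, negIf_mul,
    cdE_mul_cdE n _ k (Nat.xor_lt_two_pow hi hj) hk, negIf_negIf, h, Nat.xor_assoc]

lemma cdE_left_alternative (hi : i < 2 ^ n) (hj : j < 2 ^ n) :
    cdE n i * (cdE n i * cdE n j) = cdE n i * cdE n i * cdE n j := by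
  refine cdE_mul_assoc_of_basisSign hi hi hj ?_
  rw [(basisSign_alternative n i j hi hj).1, Nat.xor_self, basisSign_zero_left,
    basisSign_self n i hi]
  simp

lemma cdE_right_alternative (hi : i < 2 ^ n) (hj : j < 2 ^ n) :
    cdE n i * cdE n j * cdE n j = cdE n i * (cdE n j * cdE n j) := by
  refine (cdE_mul_assoc_of_basisSign hi hj hj ?_).symm
  rw [(basisSign_alternative n i j hi hj).2, Nat.xor_self, basisSign_zero_right,
    basisSign_self n j hj]
  simp

lemma cdE_flexible (hi : i < 2 ^ n) (hj : j < 2 ^ n) :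
    cdE n i * (cdE n j * cdE n i) = cdE n i * cdE n j * cdE n i := by
  refine cdE_mul_assoc_of_basisSign hi hj hi ?_
  rw [Nat.xor_comm j i, (basisSign_alternative n i j hi hj).1, Nat.xor_comm i j,
    (basisSign_alternative n j i hj hi).2]
  cases basisSign n i j <;> cases basisSign n j i <;> cases (i != 0) <;> rfl

lemma cdE_mul_self (hi : i < 2 ^ n) : cdE n i * cdE n i = negIf (i != 0) 1 := by
  rw [cdE_mul_cdE n i i hi hi, basisSign_self n i hi, Nat.xor_self, cdE_zero]

end basis

def basisLoop (n : ℕ) : Set (CD n) := {x | ∃ i < 2 ^ n, x = cdE n i ∨ x = -cdE n i}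

section basisLoop

variable {n : ℕ} {x y z : CD n}

lemma basisLoop_left_alternative (hx : x ∈ basisLoop n) (hy : y ∈ basisLoop n) :
    x * (x * y) = x * x * y := by
  obtain ⟨i, hi, rfl | rfl⟩ := hx <;> obtain ⟨j, hj, rfl | rfl⟩ := hy <;>
    simp only [neg_mul, mul_neg, neg_neg, cdE_left_alternative hi hj]

lemma basisLoop_right_alternative (hx : x ∈ basisLoop n) (hy : y ∈ basisLoop n) :
    x * y * y = x * (y * y) := by
  obtain ⟨i, hi, rfl | rfl⟩ := hx <;> obtain ⟨j, hj, rfl | rfl⟩ := hy <;>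
    simp only [neg_mul, mul_neg, neg_neg, cdE_right_alternative hi hj]

lemma basisLoop_flexible (hx : x ∈ basisLoop n) (hy : y ∈ basisLoop n) :
    x * (y * x) = x * y * x := by
  obtain ⟨i, hi, rfl | rfl⟩ := hx <;> obtain ⟨j, hj, rfl | rfl⟩ := hy <;>
    simp only [neg_mul, mul_neg, neg_neg, cdE_flexible hi hj]

lemma basisLoop_mul_self (hx : x ∈ basisLoop n) : x * x = 1 ∨ x * x = -1 := by
  obtain ⟨i, hi, rfl | rfl⟩ := hx <;>
    simp only [neg_mul, mul_neg, neg_neg, cdE_mul_self hi] <;> cases (i != 0) <;> simp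

lemma basisLoop_cLoop (hx : x ∈ basisLoop n) (hy : y ∈ basisLoop n) (hz : z ∈ basisLoop n) :
    x * (y * (y * z)) = x * y * y * z := by
  rw [basisLoop_left_alternative hy hz, basisLoop_right_alternative hx hy]
  rcases basisLoop_mul_self hy with h | h <;> simp [h]

end basisLoop

/-- `T_L` satisfies the alternative laws, the flexible law, and the C-loop
identity. -/
theorem stmt14 :
    ∀ x ∈ TL, ∀ y ∈ TL, ∀ z ∈ TL,
      x * (x * y) = (x * x) * y ∧ (x * y) * y = x * (y * y) ∧
      x * (y * x) = (x * y) * x ∧ x * (y * (y * z)) = ((x * y) * y) * z :=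
  fun _ hx _ hy _ hz => ⟨basisLoop_left_alternative hx hy, basisLoop_right_alternative hx hy,
    basisLoop_flexible hx hy, basisLoop_cLoop hx hy hz⟩
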